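/- arXiv:math/0202058 — 2 statements merged into one kernel-verified Lean document; each statement's English description precedes it below -/
import Mathlib

section
/- Let (Σ, j, ω₀) be a closed Riemann surface with compatible symplectic form, (M, ω) a compact symplectic manifold, J an ω-tame almost complex structure family, and P a bounded perturbation tensor. Define J̃ on Σ × M by the block matrix with entries j, 0, -P∘j, J, and ω̃ = Nω₀ + ω. If N > (f/2)² where f = ‖ω‖_{L∞}·sup‖P‖, then J̃ is ω̃-tame: ω̃(J̃v, v) > 0 for all nonzero tangent vectors v of Σ × M. -/
/-- Tameness of `J̃ = (j, 0; -P∘j, J)` on `Σ × M` for the form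
`ω̃ = Nω₀ + ω`: if `N > (f/2)²` where `f` bounds the pairing of the perturbation `P`
against `ω` (`|ω(P a, v)| ≤ f‖a‖‖v‖` with `‖a‖² = ω₀(ja,a)`, `‖v‖² = ω(Jv,v)`),
then `ω̃(J̃(a,v),(a,v)) = Nω₀(ja,a) + ω(-P(ja)+Jv, v) > 0` for every nonzero
tangent vector `(a,v)`. -/
theorem stmt_11 {V E : Type*} [AddCommGroup V] [Module ℝ V]
    [AddCommGroup E] [Module ℝ E]
    (ω₀ : V →ₗ[ℝ] V →ₗ[ℝ] ℝ) (j : V →ₗ[ℝ] V)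
    (ω : E →ₗ[ℝ] E →ₗ[ℝ] ℝ) (J : E →ₗ[ℝ] E)
    (hj : ∀ a, j (j a) = -a) (hJ : ∀ v, J (J v) = -v)
    (h0skew : ∀ a b, ω₀ a b = -(ω₀ b a)) (hskew : ∀ v w, ω v w = -(ω w v))
    (h0inv : ∀ a b, ω₀ (j a) (j b) = ω₀ a b) (hinv : ∀ v w, ω (J v) (J w) = ω v w)
    (h0pos : ∀ a, a ≠ 0 → 0 < ω₀ (j a) a) (hpos : ∀ v, v ≠ 0 → 0 < ω (J v) v)
    (P : V →ₗ[ℝ] E) (f N : ℝ)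
    (hP : ∀ (a : V) (v : E),
      |ω (P a) v| ≤ f * Real.sqrt (ω₀ (j a) a) * Real.sqrt (ω (J v) v))
    (hN : (f / 2) ^ 2 < N) :
    ∀ (a : V) (v : E), ¬(a = 0 ∧ v = 0) →
      0 < N * ω₀ (j a) a + ω (-(P (j a)) + J v) v := by
  have hNpos : 0 < N := lt_of_le_of_lt (sq_nonneg _) hN
  intro a v h
  have hexp : ω (-(P (j a)) + J v) v = ω (J v) v - ω (P (j a)) v := by
    rw [map_add, map_neg]
    simp [sub_eq_add_neg, add_comm]
  rw [hexp]
  by_cases ha : a = 0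
  · have hv : v ≠ 0 := fun hv => h ⟨ha, hv⟩
    simp only [ha, map_zero]
    simpa using hpos v hv
  · have hx : 0 < ω₀ (j a) a := h0pos a ha
    by_cases hv : v = 0
    · simp only [hv, map_zero, LinearMap.zero_apply]
      nlinarith
    · have hy : 0 < ω (J v) v := hpos v hv
      have heq : ω₀ (j (j a)) (j a) = ω₀ (j a) a := by
        rw [hj, map_neg]
        simp only [LinearMap.neg_apply]
        rw [h0skew (j a) a]
      have hPb := hP (j a) v
      rw [heq] at hPb
      set x := ω₀ (j a) a with hxdef
      set y := ω (J v) v with hydef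
      set sx := Real.sqrt x with hsxdef
      set sy := Real.sqrt y with hsydef
      have hsx : sx ^ 2 = x := Real.sq_sqrt hx.le
      have hsy : sy ^ 2 = y := Real.sq_sqrt hy.le
      have hsxp : 0 < sx := Real.sqrt_pos.mpr hx
      have hsyp : 0 < sy := Real.sqrt_pos.mpr hy
      have ht : ω (P (j a)) v ≤ f * sx * sy := (abs_le.mp hPb).2
      have hf2 : f ^ 2 < 4 * N := by nlinarith
      have hg : 0 < sx * sy := mul_pos hsxp hsyp
      have hsq : (|f| * (sx * sy)) ^ 2 < (N * x + y) ^ 2 := by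
        have : (|f| * (sx * sy)) ^ 2 = f ^ 2 * (x * y) := by
          rw [mul_pow, sq_abs, mul_pow, hsx, hsy]
        rw [this]
        nlinarith [sq_nonneg (N * x - y), mul_pos hx hy]
      have hlt : |f| * (sx * sy) < N * x + y :=
        lt_of_pow_lt_pow_left₀ 2 (by positivity) hsq
      have hfle : f * sx * sy ≤ |f| * (sx * sy) := by
        have := le_abs_self f
        nlinarith
      nlinarith
end

section
/- Fix a decreasing sequence ε_k > 0 and define for smooth f on a compact manifold N the norm ‖f‖_ε² = Σ_{k≥0} ε_k⟨∇^k f, ∇^k f⟩_{L²}. Then for every K > 0 the set V(K) = {f smooth : ‖f‖_ε < K} is relatively compact in the C^∞ topology, i.e. every sequence (f_n) with ‖f_n‖_ε < K has a subsequence converging in C^∞. -/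
/-!
Each derivative `f⁽ᵏ⁾` of a function in the `ε`-ball is bounded in `H¹` of the circle, since
the `ε`-norm controls `‖f⁽ᵏ⁾‖²_{L²} ≤ K² / ε_k` and `‖f⁽ᵏ⁺¹⁾‖²_{L²} ≤ K² / ε_{k+1}`.
By Cauchy–Schwarz an `H¹` bound gives a uniform bound and a uniform `1/2`-Hölder modulus, so by
Arzelà–Ascoli each sequence `(f_n⁽ᵏ⁾)_n` is relatively compact in `C⁰`. Sequential compactness
of the countable product gives one subsequence along which every derivative converges uniformly,
and uniform convergence of all derivatives makes the limit smooth with the limits as its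
derivatives.
-/

open MeasureTheory Set Filter Topology BoundedContinuousFunction

theorem Function.Periodic.deriv {𝕜 F : Type*} [NontriviallyNormedField 𝕜] [NormedAddCommGroup F]
    [NormedSpace 𝕜 F] {f : 𝕜 → F} {c : 𝕜} (hf : Function.Periodic f c) :
    Function.Periodic (deriv f) c := fun x => by
  rw [← deriv_comp_add_const, hf.funext]

theorem Function.Periodic.iteratedDeriv {𝕜 F : Type*} [NontriviallyNormedField 𝕜]
    [NormedAddCommGroup F] [NormedSpace 𝕜 F] {f : 𝕜 → F} {c : 𝕜}
    (hf : Function.Periodic f c) (k : ℕ) : Function.Periodic (iteratedDeriv k f) c := by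
  induction k with
  | zero => simpa using hf
  | succ k ih => simpa [iteratedDeriv_succ] using ih.deriv

theorem le_div_of_tsum_ofReal_mul_lt {ι : Type*} {ε a : ι → ℝ} {C : ℝ}
    (h : ∑' i, ENNReal.ofReal (ε i * a i) < ENNReal.ofReal C) {i : ι} (hε : 0 < ε i) :
    a i ≤ C / ε i := by
  have hi := ((ENNReal.le_tsum i).trans_lt h)
  rw [ENNReal.ofReal_lt_ofReal_iff'] at hi
  rw [le_div_iff₀ hε, mul_comm]
  exact hi.1.le

/-- Cauchy–Schwarz, from the nonnegativity of the variance `∫ (u - m)²`, `m` the mean of `u`. -/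
theorem sq_intervalIntegral_le_mul_intervalIntegral_sq {u : ℝ → ℝ} (hu : Continuous u) {a b : ℝ}
    (hab : a ≤ b) :
    (∫ x in a..b, u x) ^ 2 ≤ (b - a) * ∫ x in a..b, u x ^ 2 := by
  rcases hab.eq_or_lt with rfl | hlt
  · simp
  set I := ∫ x in a..b, u x
  set m := I / (b - a)
  have hvar : 0 ≤ ∫ x in a..b, (u x - m) ^ 2 :=
    intervalIntegral.integral_nonneg hab fun _ _ => sq_nonneg _
  have hexpand :
      ∫ x in a..b, (u x - m) ^ 2 = (∫ x in a..b, u x ^ 2) - 2 * m * I + (b - a) * m ^ 2 := by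
    simp_rw [sub_sq]
    have hi : ∀ g : ℝ → ℝ, Continuous g → IntervalIntegrable g volume a b :=
      fun g hg => hg.intervalIntegrable a b
    rw [intervalIntegral.integral_add (hi _ (by fun_prop)) (hi _ (by fun_prop)),
      intervalIntegral.integral_sub (hi _ (by fun_prop)) (hi _ (by fun_prop)),
      intervalIntegral.integral_mul_const, intervalIntegral.integral_const_mul,
      intervalIntegral.integral_const, smul_eq_mul]
    ring
  have hmean : m * (b - a) = I := div_mul_cancel₀ I (sub_pos.2 hlt).ne'
  nlinarith

theorem abs_sub_le_sqrt_of_integral_deriv_sq_le {h : ℝ → ℝ} (hh : ContDiff ℝ 1 h)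
    (hp : Function.Periodic h 1) {b : ℝ} (hb : ∫ x in (0 : ℝ)..1, deriv h x ^ 2 ≤ b) {s t : ℝ}
    (hst : |t - s| ≤ 1) : |h t - h s| ≤ √(|t - s| * b) := by
  wlog hle : s ≤ t generalizing s t
  · rw [abs_sub_comm, abs_sub_comm t] at *
    exact this hst (le_of_not_ge hle)
  have hc : Continuous (deriv h) := hh.continuous_deriv le_rfl
  have hc2 : Continuous fun x => deriv h x ^ 2 := by fun_prop
  have hpart : ∫ x in s..t, deriv h x ^ 2 ≤ b := by
    have hrest : 0 ≤ ∫ x in t..s + 1, deriv h x ^ 2 :=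
      intervalIntegral.integral_nonneg (by rw [abs_of_nonneg (sub_nonneg.2 hle)] at hst; linarith)
        fun _ _ => sq_nonneg _
    have hperiod : ∫ x in s..s + 1, deriv h x ^ 2 = ∫ x in (0 : ℝ)..1, deriv h x ^ 2 := by
      simpa using (hp.deriv.comp fun y => y ^ 2).intervalIntegral_add_eq s 0
    have hsplit := intervalIntegral.integral_add_adjacent_intervals (μ := volume)
      (hc2.intervalIntegrable s t) (hc2.intervalIntegrable t (s + 1))
    linarith
  have hftc : ∫ x in s..t, deriv h x = h t - h s :=
    intervalIntegral.integral_deriv_eq_sub (fun x _ => (hh.differentiable one_ne_zero) x)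
      (hc.intervalIntegrable s t)
  rw [← hftc, abs_of_nonneg (sub_nonneg.2 hle)]
  apply Real.abs_le_sqrt
  calc (∫ x in s..t, deriv h x) ^ 2 ≤ (t - s) * ∫ x in s..t, deriv h x ^ 2 :=
        sq_intervalIntegral_le_mul_intervalIntegral_sq hc hle
    _ ≤ (t - s) * b := mul_le_mul_of_nonneg_left hpart (sub_nonneg.2 hle)

theorem abs_le_sqrt_add_sqrt_of_integral_sq_le {h : ℝ → ℝ} (hh : ContDiff ℝ 1 h)
    (hp : Function.Periodic h 1) {a b : ℝ} (ha : ∫ x in (0 : ℝ)..1, h x ^ 2 ≤ a)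
    (hb : ∫ x in (0 : ℝ)..1, deriv h x ^ 2 ≤ b) {t : ℝ} (ht : t ∈ Icc (0 : ℝ) 1) :
    |h t| ≤ √a + √b := by
  have hc : Continuous h := hh.continuous
  have hb0 : 0 ≤ b :=
    (intervalIntegral.integral_nonneg zero_le_one fun _ _ => sq_nonneg _).trans hb
  have hosc : ∀ s ∈ Icc (0 : ℝ) 1, |h t| - √b ≤ |h s| := by
    intro s hs
    have hts : |t - s| ≤ 1 :=
      abs_sub_le_iff.2 ⟨by linarith [hs.1, ht.2], by linarith [hs.2, ht.1]⟩
    have := (abs_sub_le_sqrt_of_integral_deriv_sq_le hh hp hb hts).trans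
      (Real.sqrt_le_sqrt (mul_le_of_le_one_left hb0 hts))
    linarith [abs_sub_abs_le_abs_sub (h t) (h s)]
  have hmean : |h t| - √b ≤ ∫ x in (0 : ℝ)..1, |h x| := by
    simpa using intervalIntegral.integral_mono_on (μ := volume) zero_le_one
      (continuous_const.intervalIntegrable 0 1) (hc.abs.intervalIntegrable 0 1) hosc
  have hL1 : ∫ x in (0 : ℝ)..1, |h x| ≤ √a := by
    refine (le_abs_self _).trans (Real.abs_le_sqrt ?_)
    have hCS := sq_intervalIntegral_le_mul_intervalIntegral_sq hc.abs zero_le_one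
    simp only [sub_zero, one_mul, sq_abs] at hCS
    exact hCS.trans ha
  linarith

def unitIntervalRestrict (h : C(ℝ, ℝ)) : Icc (0 : ℝ) 1 →ᵇ ℝ :=
  mkOfCompact (h.restrict (Icc 0 1))

noncomputable def periodicExtension (u : Icc (0 : ℝ) 1 →ᵇ ℝ) (t : ℝ) : ℝ :=
  u ⟨Int.fract t, Int.fract_nonneg t, (Int.fract_lt_one t).le⟩

theorem periodicExtension_periodic (u : Icc (0 : ℝ) 1 →ᵇ ℝ) :
    Function.Periodic (periodicExtension u) 1 := fun t => by
  simp only [periodicExtension, Int.fract_add_one]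

theorem periodicExtension_unitIntervalRestrict {h : ℝ → ℝ} (hc : Continuous h)
    (hp : Function.Periodic h 1) : periodicExtension (unitIntervalRestrict ⟨h, hc⟩) = h :=
  funext fun t => by
  simpa [periodicExtension, unitIntervalRestrict] using hp.sub_int_mul_eq (n := ⌊t⌋) (x := t)

theorem tendstoUniformly_periodicExtension {ι : Type*} {l : Filter ι}
    {u : ι → Icc (0 : ℝ) 1 →ᵇ ℝ} {v : Icc (0 : ℝ) 1 →ᵇ ℝ} (huv : Tendsto u l (𝓝 v)) :
    TendstoUniformly (fun i => periodicExtension (u i)) (periodicExtension v) l :=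
  (tendsto_iff_tendstoUniformly.1 huv).comp _

theorem isCompact_closure_range_unitIntervalRestrict {ι : Type*} {h : ι → ℝ → ℝ}
    (hh : ∀ i, ContDiff ℝ 1 (h i)) (hp : ∀ i, Function.Periodic (h i) 1) {a b : ℝ}
    (ha : ∀ i, ∫ x in (0 : ℝ)..1, h i x ^ 2 ≤ a)
    (hb : ∀ i, ∫ x in (0 : ℝ)..1, deriv (h i) x ^ 2 ≤ b) :
    IsCompact (closure (range fun i => unitIntervalRestrict ⟨h i, (hh i).continuous⟩)) := by
  apply arzela_ascoli (Icc (-(√a + √b)) (√a + √b)) isCompact_Icc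
  · rintro _ x ⟨i, rfl⟩
    exact abs_le.1 (abs_le_sqrt_add_sqrt_of_integral_sq_le (hh i) (hp i) (ha i) (hb i) x.2)
  · refine Metric.equicontinuous_of_continuity_modulus (fun d => √(|d| * b)) ?_ _ ?_
    · simpa using ((continuous_abs.mul continuous_const).sqrt.tendsto (0 : ℝ))
    · rintro x y ⟨_, i, rfl⟩
      have hxy : |(y : ℝ) - x| ≤ 1 :=
        abs_sub_le_iff.2 ⟨by linarith [x.2.1, y.2.2], by linarith [x.2.2, y.2.1]⟩
      simpa [unitIntervalRestrict, Subtype.dist_eq, Real.dist_eq, abs_sub_comm] using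
        abs_sub_le_sqrt_of_integral_deriv_sq_le (hh i) (hp i) (hb i) hxy

theorem exists_strictMono_forall_tendsto_of_isCompact {ι X : Type*} [Countable ι]
    [TopologicalSpace X] [FirstCountableTopology X] {A : ι → Set X} (hA : ∀ k, IsCompact (A k))
    {F : ℕ → ι → X} (hF : ∀ n k, F n k ∈ A k) :
    ∃ φ : ℕ → ℕ, StrictMono φ ∧
      ∃ G : ι → X, ∀ k, Tendsto (fun n => F (φ n) k) atTop (𝓝 (G k)) := by
  obtain ⟨G, -, φ, hφ, hconv⟩ :=
    (isCompact_univ_pi hA).isSeqCompact fun n => mem_univ_pi.2 (hF n)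
  exact ⟨φ, hφ, G, tendsto_pi_nhds.1 hconv⟩

theorem contDiff_and_iteratedDeriv_eq_of_tendstoUniformly {𝕜 F ι : Type*} [RCLike 𝕜]
    [NormedAddCommGroup F] [NormedSpace 𝕜 F] {l : Filter ι} [l.NeBot] {f : ι → 𝕜 → F}
    {g : ℕ → 𝕜 → F} (hf : ∀ i, ContDiff 𝕜 (⊤ : ℕ∞) (f i))
    (hfg : ∀ k, TendstoUniformly (fun i => iteratedDeriv k (f i)) (g k) l) :
    ContDiff 𝕜 (⊤ : ℕ∞) (g 0) ∧ ∀ k, iteratedDeriv k (g 0) = g k := by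
  have hderiv : ∀ k x, HasDerivAt (g k) (g (k + 1) x) x := fun k =>
    hasDerivAt_of_tendstoUniformly (hfg (k + 1))
      (Eventually.of_forall fun i x => by
        rw [iteratedDeriv_succ]
        exact ((hf i).differentiable_iteratedDeriv k
          (mod_cast ENat.natCast_lt_top k) x).hasDerivAt)
      fun x => (hfg k).tendsto_at x
  have hiter : ∀ k, iteratedDeriv k (g 0) = g k := by
    intro k
    induction k with
    | zero => exact iteratedDeriv_zero
    | succ k ih => rw [iteratedDeriv_succ, ih]; exact funext fun x => (hderiv k x).deriv
  refine ⟨contDiff_of_differentiable_iteratedDeriv fun m _ => ?_, hiter⟩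
  rw [hiter m]
  exact fun x => (hderiv m x).differentiableAt

theorem stmt_13_general (ε : ℕ → ℝ) (hε : ∀ k, 0 < ε k)
    (K : ℝ)
    (f : ℕ → ℝ → ℝ)
    (hsmooth : ∀ n, ContDiff ℝ (⊤ : ℕ∞) (f n))
    (hper : ∀ n, Function.Periodic (f n) 1)
    (hbound : ∀ n,
      (∑' k : ℕ, ENNReal.ofReal
          (ε k * ∫ t in (0:ℝ)..1, (iteratedDeriv k (f n) t) ^ 2))
        < ENNReal.ofReal (K ^ 2)) :
    ∃ (φ : ℕ → ℕ) (g : ℝ → ℝ), StrictMono φ ∧ ContDiff ℝ (⊤ : ℕ∞) g ∧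
      Function.Periodic g 1 ∧
      ∀ k : ℕ, TendstoUniformly (fun n => iteratedDeriv k (f (φ n)))
        (iteratedDeriv k g) Filter.atTop := by
  have hC1 : ∀ n k, ContDiff ℝ 1 (iteratedDeriv k (f n)) := fun n k => by
    rw [iteratedDeriv_eq_iterate]
    exact ((hsmooth n).iterate_deriv k).of_le (mod_cast le_top)
  have hL2 : ∀ n k, ∫ t in (0 : ℝ)..1, iteratedDeriv k (f n) t ^ 2 ≤ K ^ 2 / ε k :=
    fun n k => le_div_of_tsum_ofReal_mul_lt (hbound n) (hε k)
  have hcpt : ∀ k, IsCompact (closure (range fun n =>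
      unitIntervalRestrict ⟨iteratedDeriv k (f n), (hC1 n k).continuous⟩)) := fun k =>
    isCompact_closure_range_unitIntervalRestrict (fun n => hC1 n k)
      (fun n => (hper n).iteratedDeriv k) (fun n => hL2 n k)
      (fun n => by simpa only [← iteratedDeriv_succ] using hL2 n (k + 1))
  obtain ⟨φ, hφ, G, hG⟩ :=
    exists_strictMono_forall_tendsto_of_isCompact hcpt fun n k => subset_closure ⟨n, rfl⟩
  have hunif : ∀ k, TendstoUniformly (fun n => iteratedDeriv k (f (φ n)))
      (periodicExtension (G k)) atTop := fun k => by
    simpa only [periodicExtension_unitIntervalRestrict _ ((hper _).iteratedDeriv k)] using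
      tendstoUniformly_periodicExtension (hG k)
  obtain ⟨hg, hiter⟩ :=
    contDiff_and_iteratedDeriv_eq_of_tendstoUniformly (fun n => hsmooth (φ n)) hunif
  exact ⟨φ, _, hφ, hg, periodicExtension_periodic _, fun k => hiter k ▸ hunif k⟩

/-- Floer's `ε`-norm `‖f‖_ε² = Σ_k ε_k ‖∇^k f‖²_{L²}` on smooth
functions on a compact manifold (modeled here by 1-periodic smooth functions on
`ℝ`): for every `K > 0`, the ball `V(K) = {f : ‖f‖_ε < K}` is relatively compact in
the `C^∞` topology — every sequence in it has a subsequence converging in `C^∞`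
(all derivatives uniformly). -/
theorem stmt_13 (ε : ℕ → ℝ) (hε : ∀ k, 0 < ε k) (hdec : ∀ k, ε (k + 1) ≤ ε k)
    (K : ℝ) (hK : 0 < K)
    (f : ℕ → ℝ → ℝ)
    (hsmooth : ∀ n, ContDiff ℝ (⊤ : ℕ∞) (f n))
    (hper : ∀ n, Function.Periodic (f n) 1)
    (hbound : ∀ n,
      (∑' k : ℕ, ENNReal.ofReal
          (ε k * ∫ t in (0:ℝ)..1, (iteratedDeriv k (f n) t) ^ 2))
        < ENNReal.ofReal (K ^ 2)) :
    ∃ (φ : ℕ → ℕ) (g : ℝ → ℝ), StrictMono φ ∧ ContDiff ℝ (⊤ : ℕ∞) g ∧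
      Function.Periodic g 1 ∧
      ∀ k : ℕ, TendstoUniformly (fun n => iteratedDeriv k (f (φ n)))
        (iteratedDeriv k g) Filter.atTop :=
  stmt_13_general ε hε K f hsmooth hper hbound
end
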